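/- Let G be a group with a convergence group action on a compact metrizable space M with at least three points, let H and J be infinite subgroups of G, and let z ∈ Λ(H) ∩ Λ(J) be a point whose stabilizer Stab_G(z) contains no loxodromic element and which is a bounded parabolic point of both H and J. Then either z is a bounded parabolic point of H ∩ J, or z is an isolated point of Λ(H) ∩ Λ(J) and z ∉ Λ(H ∩ J). -/

import Mathlib

open Pointwise Filter Topology Set

section ConvergenceGroups

variable (G M : Type*) [Group G] [TopologicalSpace M] [MulAction G M]

/-- A convergence group action: the action is by homeomorphisms (each element acts
continuously, hence as a homeomorphism since the action is by a group), and the induced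
diagonal action on the space of distinct triples of points of `M` is properly
discontinuous. -/
def IsConvergenceAction : Prop :=
  (∀ g : G, Continuous fun x : M => g • x) ∧
    ∀ K L : Set (M × M × M), IsCompact K → IsCompact L →
      (∀ t ∈ K ∪ L, t.1 ≠ t.2.1 ∧ t.1 ≠ t.2.2 ∧ t.2.1 ≠ t.2.2) →
      {g : G | ((g • K) ∩ L).Nonempty}.Finite

/-- The limit set of a subgroup `H ≤ G`: the set of accumulation points in `M` of
the `H`-orbits of points of `M`. -/
def limitSet (H : Subgroup G) : Set M :=
  {x : M | ∃ m : M, x ∈ closure (((fun h : G => h • m) '' (H : Set G)) \ {x})}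

/-- `z` is a conical limit point of the subgroup `H`. -/
def IsConicalLimitPoint (H : Subgroup G) (z : M) : Prop :=
  ∃ (h : ℕ → G) (a b : M), (∀ n, h n ∈ H) ∧ a ≠ b ∧
    Tendsto (fun n => h n • z) atTop (nhds a) ∧
    ∀ q : M, q ≠ z → Tendsto (fun n => h n • q) atTop (nhds b)

/-- `g` is loxodromic: it has infinite order and fixes exactly two points of `M`. -/
def IsLoxodromic (g : G) : Prop :=
  ¬ IsOfFinOrder g ∧ {x : M | g • x = x}.encard = 2

/-- `p` is a bounded parabolic point of the subgroup `H`: its stabilizer in `H` is an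
infinite subgroup containing no loxodromic element, which acts cocompactly on
`Λ(H) \ {p}`. -/
def IsBoundedParabolicPoint (H : Subgroup G) (p : M) : Prop :=
  ((H ⊓ MulAction.stabilizer G p : Subgroup G) : Set G).Infinite ∧
  (∀ g ∈ H ⊓ MulAction.stabilizer G p, ¬ IsLoxodromic G M g) ∧
  ∃ C : Set M, IsCompact C ∧ C ⊆ limitSet G M H \ {p} ∧
    limitSet G M H \ {p} ⊆ ⋃ g ∈ (H ⊓ MulAction.stabilizer G p : Subgroup G), g • C

/-- `H` is dynamically quasiconvex: for every pair of disjoint closed subsets `K, L` of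
`M`, the set of cosets `gH` with `gΛ(H)` meeting both `K` and `L` is finite. -/
def DynamicallyQuasiconvex (H : Subgroup G) : Prop :=
  ∀ K L : Set M, IsClosed K → IsClosed L → Disjoint K L →
    ((fun g : G => (g : G ⧸ H)) ''
      {g : G | ((g • limitSet G M H) ∩ K).Nonempty ∧
               ((g • limitSet G M H) ∩ L).Nonempty}).Finite

end ConvergenceGroups
/-!
Everything rests on the convergence property: every sequence leaving the finite subsets of `G`
has a subsequence converging to a point `a`, uniformly on compacta of `M \ {r}`. As `Stab(z)`
has no loxodromic element, such a sequence in `Stab(z)` has `r = a = z` (otherwise ping-pong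
produces a loxodromic element), so `Stab(z)` acts properly discontinuously on `M \ {z}`: only
finitely many `f ∈ Stab(z)` move the compact set `C_J` onto a set meeting `C_H`. Writing a point
of `Λ(H ∩ J) \ {z}` as `h c = j c'` with `c ∈ C_H`, `c' ∈ C_J`, the finitely many possible
`h⁻¹ j` give a compact fundamental set for `Stab_{H ∩ J}(z)`, and the same pigeonhole shows that
`Stab_{H ∩ J}(z)` is infinite once `z` is a limit of other points of `Λ(H) ∩ Λ(J)`. If instead
`z` is isolated in `Λ(H) ∩ Λ(J)` but lies in `Λ(H ∩ J)`, then, since a limit point accumulates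
every orbit except those of at most two points, `Λ(H) ∩ Λ(J)` is finite, so the `H ∩ J`-orbit
of `z` is finite and its stabilizer is infinite.
-/

open Metric MulAction

lemma ne_and_ne_or_ne_and_ne_or_ne_and_ne {α : Type*} {a b c : α} (hab : a ≠ b) (hac : a ≠ c)
    (hbc : b ≠ c) (u v : α) : (a ≠ u ∧ a ≠ v) ∨ (b ≠ u ∧ b ≠ v) ∨ (c ≠ u ∧ c ≠ v) := by
  grind

lemma exists_ne_and_ne {α : Type*} (h3 : ∃ a b c : α, a ≠ b ∧ a ≠ c ∧ b ≠ c) (u v : α) :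
    ∃ w, w ≠ u ∧ w ≠ v := by
  obtain ⟨a, b, c, hab, hac, hbc⟩ := h3
  rcases ne_and_ne_or_ne_and_ne_or_ne_and_ne hab hac hbc u v with h | h | h <;> exact ⟨_, h⟩

section Cross

variable {α : Type*}

def distinctTriples (α : Type*) : Set (α × α × α) :=
  {t | t.1 ≠ t.2.1 ∧ t.1 ≠ t.2.2 ∧ t.2.1 ≠ t.2.2}

def NoThreeMatching (R : Set (α × α)) : Prop :=
  ∀ p ∈ R, ∀ q ∈ R, ∀ s ∈ R, (p.1, q.1, s.1) ∈ distinctTriples α →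
    (p.2, q.2, s.2) ∉ distinctTriples α

variable {R : Set (α × α)}

lemma forall_mem_eq_or_eq_of_infinite (hR : NoThreeMatching R) {r a : α}
    (hrow : {x | (x, a) ∈ R}.Infinite) (hcol : {y | (r, y) ∈ R}.Infinite) :
    ∀ p ∈ R, p.1 = r ∨ p.2 = a := by
  intro p hp
  by_contra! h
  obtain ⟨x, hxR, hx⟩ := (hrow.sdiff (toFinite {r, p.1})).nonempty
  obtain ⟨y, hyR, hy⟩ := (hcol.sdiff (toFinite {a, p.2})).nonempty
  simp only [mem_insert_iff, mem_singleton_iff, not_or] at hx hy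
  exact hR p hp _ hxR _ hyR ⟨Ne.symm hx.2, h.1, hx.1⟩ ⟨h.2, Ne.symm hy.2, Ne.symm hy.1⟩

lemma infinite_setOf_fst_or_infinite_setOf_fst [Infinite α] (hR : NoThreeMatching R)
    (hfst : ∀ x, ∃ y, (x, y) ∈ R) {p q : α × α} (hp : p ∈ R) (hq : q ∈ R)
    (h₁ : p.1 ≠ q.1) (h₂ : p.2 ≠ q.2) :
    {x | (x, p.2) ∈ R}.Infinite ∨ {x | (x, q.2) ∈ R}.Infinite := by
  refine infinite_union.1 ((toFinite {p.1, q.1}).infinite_compl.mono fun x hx => ?_)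
  simp only [mem_compl_iff, mem_insert_iff, mem_singleton_iff, not_or] at hx
  obtain ⟨y, hy⟩ := hfst x
  by_contra! h
  rw [mem_union, not_or] at h
  exact hR _ hy p hp q hq ⟨hx.1, hx.2, h₁⟩
    ⟨fun (e : y = p.2) => h.1 (e ▸ hy), fun (e : y = q.2) => h.2 (e ▸ hy), h₂⟩

lemma infinite_setOf_snd_or_infinite_setOf_snd [Infinite α] (hR : NoThreeMatching R)
    (hsnd : ∀ y, ∃ x, (x, y) ∈ R) {p q : α × α} (hp : p ∈ R) (hq : q ∈ R)
    (h₁ : p.1 ≠ q.1) (h₂ : p.2 ≠ q.2) :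
    {y | (p.1, y) ∈ R}.Infinite ∨ {y | (q.1, y) ∈ R}.Infinite := by
  refine infinite_union.1 ((toFinite {p.2, q.2}).infinite_compl.mono fun y hy => ?_)
  simp only [mem_compl_iff, mem_insert_iff, mem_singleton_iff, not_or] at hy
  obtain ⟨x, hx⟩ := hsnd y
  by_contra! h
  rw [mem_union, not_or] at h
  exact hR _ hx p hp q hq
    ⟨fun (e : x = p.1) => h.1 (e ▸ hx), fun (e : x = q.1) => h.2 (e ▸ hx), h₁⟩ ⟨hy.1, hy.2, h₂⟩

lemma exists_eq_or_eq_of_noThreeMatching [Infinite α] (hR : NoThreeMatching R)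
    (hfst : ∀ x, ∃ y, (x, y) ∈ R) (hsnd : ∀ y, ∃ x, (x, y) ∈ R) :
    ∃ r a : α, ∀ p ∈ R, p.1 = r ∨ p.2 = a := by
  by_cases h : ∃ p ∈ R, ∃ q ∈ R, p.1 ≠ q.1 ∧ p.2 ≠ q.2
  · obtain ⟨p, hp, q, hq, h₁, h₂⟩ := h
    have hp' := forall_mem_eq_or_eq_of_infinite hR (r := p.1) (a := p.2)
    have hq' := forall_mem_eq_or_eq_of_infinite hR (r := q.1) (a := q.2)
    rcases infinite_setOf_fst_or_infinite_setOf_fst hR hfst hp hq h₁ h₂ with hrow | hrow <;>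
    rcases infinite_setOf_snd_or_infinite_setOf_snd hR hsnd hp hq h₁ h₂ with hcol | hcol
    · exact absurd (hp' hrow hcol q hq) (by tauto)
    · exact ⟨q.1, p.2, forall_mem_eq_or_eq_of_infinite hR hrow hcol⟩
    · exact ⟨p.1, q.2, forall_mem_eq_or_eq_of_infinite hR hrow hcol⟩
    · exact absurd (hq' hrow hcol p hp) (by tauto)
  · push Not at h
    obtain ⟨y, hy⟩ := hfst (Classical.arbitrary α)
    refine ⟨Classical.arbitrary α, y, fun p hp => ?_⟩
    by_cases hx : p.1 = Classical.arbitrary α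
    · exact Or.inl hx
    · exact Or.inr (h p hp _ hy hx)

end Cross

section GraphLimit

variable {M : Type*} [MetricSpace M] [CompactSpace M] [Nonempty M]

/-- `R` is the Hausdorff limit of the graphs of `f ∘ φ`; the two conjuncts are the two halves
of Hausdorff convergence. -/
lemma exists_subseq_graph_limit {f : ℕ → M → M} (hf : ∀ n, Continuous (f n)) :
    ∃ φ : ℕ → ℕ, StrictMono φ ∧ ∃ R : Set (M × M),
      (∀ ψ : ℕ → ℕ, StrictMono ψ → ∀ (x : ℕ → M) (p : M × M),
        Tendsto (fun n => (x n, f (φ (ψ n)) (x n))) atTop (𝓝 p) → p ∈ R) ∧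
      ∀ p ∈ R, ∀ ε > 0, ∀ᶠ n in atTop, ∃ x, dist (x, f (φ n) x) p < ε := by
  let Γ : ℕ → TopologicalSpace.NonemptyCompacts (M × M) := fun n =>
    ⟨⟨range fun x => (x, f n x), isCompact_range (continuous_id.prodMk (hf n))⟩,
      range_nonempty _⟩
  obtain ⟨R, -, φ, hφ, hR⟩ := isCompact_univ.tendsto_subseq fun n => mem_univ (Γ n)
  have hdist : Tendsto (fun n => hausdorffDist (Γ (φ n) : Set (M × M)) R) atTop (𝓝 0) :=
    tendsto_iff_dist_tendsto_zero.1 hR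
  have hfinite : ∀ n, hausdorffEDist (Γ n : Set (M × M)) (R : Set (M × M)) ≠ ⊤ :=
    fun n => hausdorffEDist_ne_top_of_nonempty_of_bounded (Γ n).nonempty R.nonempty
      (Γ n).isCompact.isBounded R.isCompact.isBounded
  refine ⟨φ, hφ, R, fun ψ hψ x p hx => ?_, fun p hp ε hε => ?_⟩
  · have hle : ∀ n, infDist (x n, f (φ (ψ n)) (x n)) (R : Set (M × M)) ≤
        hausdorffDist (Γ (φ (ψ n)) : Set (M × M)) R := fun n => by
      have hmem : (x n, f (φ (ψ n)) (x n)) ∈ (Γ (φ (ψ n)) : Set (M × M)) := ⟨x n, rfl⟩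
      simpa [infDist_zero_of_mem hmem] using
        infDist_le_infDist_add_hausdorffDist (x := (x n, f (φ (ψ n)) (x n))) (hfinite (φ (ψ n)))
    have hzero : infDist p (R : Set (M × M)) ≤ 0 :=
      le_of_tendsto_of_tendsto' (((continuous_infDist_pt _).tendsto p).comp hx)
        (hdist.comp hψ.tendsto_atTop) hle
    exact (R.isCompact.isClosed.mem_iff_infDist_zero R.nonempty).2
      (le_antisymm hzero infDist_nonneg)
  · filter_upwards [hdist.eventually (eventually_lt_nhds hε)] with n hn
    obtain ⟨_, ⟨x, rfl⟩, hx⟩ := exists_dist_lt_of_hausdorffDist_lt' hp hn (hfinite _)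
    exact ⟨x, hx⟩

end GraphLimit

lemma isOpen_distinctTriples {α : Type*} [TopologicalSpace α] [T2Space α] :
    IsOpen (distinctTriples α) :=
  (isOpen_ne_fun continuous_fst (continuous_fst.comp continuous_snd)).inter <|
    (isOpen_ne_fun continuous_fst (continuous_snd.comp continuous_snd)).inter
      (isOpen_ne_fun (continuous_fst.comp continuous_snd) (continuous_snd.comp continuous_snd))

lemma smul_mem_distinctTriples {G M : Type*} [Group G] [MulAction G M] (g : G)
    {t : M × M × M} (ht : t ∈ distinctTriples M) : g • t ∈ distinctTriples M :=
  ⟨(MulAction.injective g).ne ht.1, (MulAction.injective g).ne ht.2.1,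
    (MulAction.injective g).ne ht.2.2⟩

section Collapsing

variable {G M : Type*} [Group G] [MulAction G M] [TopologicalSpace M]

/-- `k n` converges to the constant map `a` uniformly on compact subsets of `M \ {r}`;
`a` is the attracting and `r` the repelling point. -/
def IsCollapsing (k : ℕ → G) (r a : M) : Prop :=
  ∀ C : Set M, IsCompact C → r ∉ C → ∀ V ∈ 𝓝 a, ∀ᶠ n in atTop, k n • C ⊆ V

namespace IsCollapsing

variable {k : ℕ → G} {r a : M}

lemma tendsto (h : IsCollapsing k r a) {x : M} (hx : x ≠ r) :
    Tendsto (fun n => k n • x) atTop (𝓝 a) := fun V hV =>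
  (h {x} isCompact_singleton (by simpa using hx.symm) V hV).mono fun _ hn =>
    hn (smul_mem_smul_set rfl)

lemma inv [CompactSpace M] [T2Space M] (h : IsCollapsing k r a) :
    IsCollapsing (fun n => (k n)⁻¹) a r := by
  intro C hC haC V hV
  filter_upwards [h _ isOpen_interior.isClosed_compl.isCompact
      (fun hr => hr (mem_interior_iff_mem_nhds.2 hV)) _ (hC.isClosed.isOpen_compl.mem_nhds haC)]
    with n hn
  rintro _ ⟨x, hx, rfl⟩
  by_contra hxV
  exact hn ⟨_, fun hi => hxV (interior_subset hi), smul_inv_smul (k n) x⟩ hx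

lemma smul_eq_of_commute [T2Space M] [ContinuousConstSMul G M] (h : IsCollapsing k r a)
    (h3 : ∃ a b c : M, a ≠ b ∧ a ≠ c ∧ b ≠ c) {g : G} (hg : ∀ n, Commute g (k n)) :
    g • a = a := by
  obtain ⟨u, hur, hu⟩ := exists_ne_and_ne h3 r (g⁻¹ • r)
  have hgu : g • u ≠ r := fun hgu => hu (by rw [← hgu, inv_smul_smul])
  exact tendsto_nhds_unique (((continuous_const_smul g).tendsto a).comp (h.tendsto hur))
    ((h.tendsto hgu).congr fun n => by rw [smul_smul, ← (hg n).eq, ← smul_smul]; rfl)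

end IsCollapsing

end Collapsing

section ConvergenceAction

variable {G M : Type*} [Group G] [MulAction G M] [TopologicalSpace M]

namespace IsConvergenceAction

lemma infinite_space [Infinite G] (hconv : IsConvergenceAction G M)
    (h3 : ∃ a b c : M, a ≠ b ∧ a ≠ c ∧ b ≠ c) : Infinite M := by
  by_contra hM
  rw [not_infinite_iff_finite] at hM
  obtain ⟨a, b, c, hab, hac, hbc⟩ := h3
  have hD := (toFinite (distinctTriples M)).isCompact
  refine infinite_univ (α := G) ((hconv.2 _ _ hD hD fun t ht => ?_).subset fun g _ => ?_)
  · rwa [union_self] at ht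
  · exact ⟨g • (a, b, c), smul_mem_smul_set ⟨hab, hac, hbc⟩,
      smul_mem_distinctTriples g ⟨hab, hac, hbc⟩⟩

lemma isOfFinOrder_of_smul_eq (hconv : IsConvergenceAction G M) {g : G} {t : M × M × M}
    (ht : t ∈ distinctTriples M) (hgt : g • t = t) : IsOfFinOrder g := by
  by_contra hg
  refine infinite_range_of_injective (injective_pow_iff_not_isOfFinOrder.2 hg)
    ((hconv.2 {t} {t} isCompact_singleton isCompact_singleton fun _ hs => ?_).subset ?_)
  · rw [union_self, mem_singleton_iff] at hs
    exact hs ▸ ht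
  · rintro _ ⟨n, rfl⟩
    have : g ^ n • t = t := (stabilizer G t).pow_mem hgt n
    exact ⟨t, by simp [smul_set_singleton, this]⟩

lemma isLoxodromic_of_smul_eq (hconv : IsConvergenceAction G M) {g : G}
    (hg : ¬IsOfFinOrder g) {p q : M} (hpq : p ≠ q) (hp : g • p = p) (hq : g • q = q) :
    IsLoxodromic G M g := by
  refine ⟨hg, ?_⟩
  have hfix : {x : M | g • x = x} = {p, q} := by
    ext x
    refine ⟨fun hx => ?_, ?_⟩
    · by_contra h
      simp only [mem_insert_iff, mem_singleton_iff, not_or] at h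
      exact hg (hconv.isOfFinOrder_of_smul_eq (t := (p, q, x))
        ⟨hpq, Ne.symm h.1, Ne.symm h.2⟩
        (by simp only [Prod.smul_mk, hp, hq, show g • x = x from hx]))
    · rintro (rfl | rfl) <;> assumption
  rw [hfix, encard_pair hpq]

end IsConvergenceAction

end ConvergenceAction

section ConvergenceProperty

variable {G M : Type*} [Group G] [MulAction G M] [MetricSpace M] [CompactSpace M]

lemma isCollapsing_of_graph_limit {k : ℕ → G} {R : Set (M × M)}
    (hlim : ∀ ψ : ℕ → ℕ, StrictMono ψ → ∀ (x : ℕ → M) (p : M × M),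
      Tendsto (fun n => (x n, k (ψ n) • x n)) atTop (𝓝 p) → p ∈ R)
    {r a : M} (hR : ∀ p ∈ R, p.1 = r ∨ p.2 = a) : IsCollapsing k r a := by
  intro C hC hrC V hV
  by_contra h
  obtain ⟨ψ, hψ, hfar⟩ := extraction_of_frequently_atTop (not_eventually.1 h)
  have hwit : ∀ n, ∃ x ∈ C, k (ψ n) • x ∉ interior V := fun n => by
    obtain ⟨_, ⟨x, hx, rfl⟩, hxV⟩ := not_subset.1 (hfar n)
    exact ⟨x, hx, fun hi => hxV (interior_subset hi)⟩
  choose x hxC hxV using hwit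
  obtain ⟨p, ⟨hp₁, hp₂⟩, ψ', hψ', hp⟩ :=
    (hC.prod isOpen_interior.isClosed_compl.isCompact).tendsto_subseq
      (x := fun n => (x n, k (ψ n) • x n)) fun n => ⟨hxC n, hxV n⟩
  rcases hR p (hlim (ψ ∘ ψ') (hψ.comp hψ') (x ∘ ψ') p hp) with h₁ | h₂
  · exact hrC (h₁ ▸ hp₁)
  · exact hp₂ (h₂ ▸ mem_interior_iff_mem_nhds.2 hV)

namespace IsConvergenceAction

lemma noThreeMatching (hconv : IsConvergenceAction G M) {k : ℕ → G}
    (hk : Tendsto k atTop cofinite) {R : Set (M × M)}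
    (happrox : ∀ p ∈ R, ∀ ε > 0, ∀ᶠ n in atTop, ∃ x, dist (x, k n • x) p < ε) :
    NoThreeMatching R := by
  intro p hp q hq s hs h₁ h₂
  obtain ⟨δ₁, hδ₁, hball₁⟩ := Metric.isOpen_iff.1 isOpen_distinctTriples _ h₁
  obtain ⟨δ₂, hδ₂, hball₂⟩ := Metric.isOpen_iff.1 isOpen_distinctTriples _ h₂
  obtain ⟨δ, hδ, hδ₁', hδ₂'⟩ : ∃ δ > 0, δ < δ₁ ∧ δ < δ₂ :=
    ⟨min δ₁ δ₂ / 2, by positivity, by linarith [min_le_left δ₁ δ₂],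
      by linarith [min_le_right δ₁ δ₂]⟩
  have hfin := hconv.2 (closedBall (p.1, q.1, s.1) δ) (closedBall (p.2, q.2, s.2) δ)
    (isCompact_closedBall _ _) (isCompact_closedBall _ _) fun t ht => by
      rcases ht with ht | ht
      · exact hball₁ (mem_ball.2 ((mem_closedBall.1 ht).trans_lt hδ₁'))
      · exact hball₂ (mem_ball.2 ((mem_closedBall.1 ht).trans_lt hδ₂'))
  have hev : ∀ᶠ n in atTop,
      ((k n • closedBall (p.1, q.1, s.1) δ) ∩ closedBall (p.2, q.2, s.2) δ).Nonempty := by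
    filter_upwards [happrox p hp δ hδ, happrox q hq δ hδ, happrox s hs δ hδ]
      with n ⟨x, hx⟩ ⟨y, hy⟩ ⟨z, hz⟩
    rw [Prod.dist_eq, max_lt_iff] at hx hy hz
    refine ⟨k n • (x, y, z), smul_mem_smul_set ?_, ?_⟩ <;>
      simp only [mem_closedBall, Prod.dist_eq, Prod.smul_mk, max_le_iff]
    · exact ⟨hx.1.le, hy.1.le, hz.1.le⟩
    · exact ⟨hx.2.le, hy.2.le, hz.2.le⟩
  obtain ⟨n, hn, hn'⟩ := (hev.and (hk.eventually_mem hfin.compl_mem_cofinite)).exists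
  exact hn' hn

/-- The convergence property. The limit relation of the graphs has both projections onto
`M`, and proper discontinuity on triples forbids three of its pairs from having distinct
first and distinct second coordinates, which forces it into a cross `{r} × M ∪ M × {a}`. -/
theorem exists_isCollapsing_subseq (hconv : IsConvergenceAction G M)
    (h3 : ∃ a b c : M, a ≠ b ∧ a ≠ c ∧ b ≠ c) {k : ℕ → G} (hk : Tendsto k atTop cofinite) :
    ∃ φ : ℕ → ℕ, StrictMono φ ∧ ∃ r a : M, IsCollapsing (k ∘ φ) r a := by
  have : Infinite G := by
    by_contra hG
    rw [not_infinite_iff_finite] at hG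
    exact hk.neBot.ne cofinite_eq_bot
  have := hconv.infinite_space h3
  obtain ⟨φ, hφ, R, hlim, happrox⟩ := exists_subseq_graph_limit fun n => hconv.1 (k n)
  have hfst : ∀ x, ∃ y, (x, y) ∈ R := fun x => by
    obtain ⟨y, -, ψ, hψ, hy⟩ :=
      isCompact_univ.tendsto_subseq (x := fun n => k (φ n) • x) fun _ => mem_univ _
    exact ⟨y, hlim ψ hψ (fun _ => x) _ (tendsto_const_nhds.prodMk_nhds hy)⟩
  have hsnd : ∀ y, ∃ x, (x, y) ∈ R := fun y => by
    obtain ⟨x, -, ψ, hψ, hx⟩ :=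
      isCompact_univ.tendsto_subseq (x := fun n => (k (φ n))⁻¹ • y) fun _ => mem_univ _
    exact ⟨x, hlim ψ hψ (fun n => (k (φ (ψ n)))⁻¹ • y) _
      (by simpa using hx.prodMk_nhds tendsto_const_nhds)⟩
  obtain ⟨r, a, hR⟩ := exists_eq_or_eq_of_noThreeMatching
    (hconv.noThreeMatching (hk.comp hφ.tendsto_atTop) happrox) hfst hsnd
  exact ⟨φ, hφ, r, a, isCollapsing_of_graph_limit hlim hR⟩

end IsConvergenceAction

end ConvergenceProperty

section Parabolic

variable {G M : Type*} [Group G] [MulAction G M] [MetricSpace M] [CompactSpace M]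

namespace IsConvergenceAction

/-- A second fixed point of `g` is found outside `U` as the attracting point of a collapsing
subsequence of the powers of `g`. -/
lemma isLoxodromic_of_smul_compl_subset (hconv : IsConvergenceAction G M)
    (h3 : ∃ a b c : M, a ≠ b ∧ a ≠ c ∧ b ≠ c) {g : G} {p : M} {U V : Set M} (hU : IsOpen U)
    (hpU : p ∈ U) (hgp : g • p = p) (hgU : g • Uᶜ ⊆ V) (hVU : V ⊆ Uᶜ)
    (hUV : (Uᶜ \ V).Nonempty) : IsLoxodromic G M g := by
  have : ContinuousConstSMul G M := ⟨hconv.1⟩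
  obtain ⟨w, hwU, hwV⟩ := hUV
  have hpow : ∀ n : ℕ, g ^ (n + 1) • Uᶜ ⊆ V := by
    intro n
    induction n with
    | zero => simpa using hgU
    | succ n ih =>
      rw [pow_succ', mul_smul]
      exact (smul_set_mono (ih.trans hVU)).trans hgU
  have hg : ¬IsOfFinOrder g := by
    intro hfin
    obtain ⟨n, hn, hgn⟩ := isOfFinOrder_iff_pow_eq_one.1 hfin
    obtain ⟨m, rfl⟩ := Nat.exists_eq_succ_of_ne_zero hn.ne'
    exact hwV (by simpa [hgn] using hpow m (smul_mem_smul_set hwU))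
  have hk : Tendsto (fun n : ℕ => g ^ (n + 1)) atTop cofinite :=
    ((injective_pow_iff_not_isOfFinOrder.2 hg).comp (add_left_injective 1)).tendsto_cofinite
      |>.mono_left atTop_le_cofinite
  obtain ⟨φ, -, r, a, hcol⟩ := hconv.exists_isCollapsing_subseq h3 hk
  have hgw : g • w ∈ V := hgU (smul_mem_smul_set hwU)
  obtain ⟨x, hxU, hxr⟩ : ∃ x ∈ Uᶜ, x ≠ r := by
    by_cases hwr : w = r
    · exact ⟨g • w, hVU hgw, fun h => hwV (by rwa [hwr, ← h])⟩
    · exact ⟨w, hwU, hwr⟩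
  have haU : a ∈ Uᶜ := closure_minimal hVU hU.isClosed_compl <|
    mem_closure_of_tendsto (hcol.tendsto hxr)
      (Eventually.of_forall fun n => hpow _ (smul_mem_smul_set hxU))
  exact hconv.isLoxodromic_of_smul_eq hg (fun (h : p = a) => haU (h ▸ hpU)) hgp
    (hcol.smul_eq_of_commute h3 fun n => (Commute.refl g).pow_right _)

lemma eq_of_isCollapsing_of_mem_stabilizer (hconv : IsConvergenceAction G M)
    (h3 : ∃ a b c : M, a ≠ b ∧ a ≠ c ∧ b ≠ c) {z : M}
    (hnolox : ∀ g ∈ stabilizer G z, ¬IsLoxodromic G M g) {k : ℕ → G}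
    (hkz : ∀ n, k n ∈ stabilizer G z) {r a : M} (hcol : IsCollapsing k r a) : a = z := by
  by_cases hrz : r = z
  · -- some `k n` plays ping-pong between neighbourhoods of `r = z` and `a`
    subst hrz
    by_contra har
    obtain ⟨w, hwr, hwa⟩ := exists_ne_and_ne h3 r a
    obtain ⟨U, V, hU, hV, hrU, haV, hUV⟩ := t2_separation (Ne.symm har)
    have hU' : IsOpen (U ∩ {w}ᶜ) := hU.inter isOpen_compl_singleton
    obtain ⟨n, hn⟩ := (hcol _ hU'.isClosed_compl.isCompact (fun h => h ⟨hrU, hwr.symm⟩) _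
      (inter_mem (hV.mem_nhds haV) (isOpen_compl_singleton.mem_nhds hwa.symm))).exists
    exact hnolox (k n) (hkz n) (hconv.isLoxodromic_of_smul_compl_subset h3 hU' ⟨hrU, hwr.symm⟩
      (hkz n) hn (fun x hx hxU => disjoint_left.1 hUV hxU.1 hx.1)
      ⟨w, fun h => h.2 rfl, fun h => h.2 rfl⟩)
  · exact tendsto_nhds_unique (hcol.tendsto (Ne.symm hrz))
      (tendsto_const_nhds.congr fun n => (hkz n).symm)

lemma eq_and_eq_of_isCollapsing_of_mem_stabilizer (hconv : IsConvergenceAction G M)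
    (h3 : ∃ a b c : M, a ≠ b ∧ a ≠ c ∧ b ≠ c) {z : M}
    (hnolox : ∀ g ∈ stabilizer G z, ¬IsLoxodromic G M g) {k : ℕ → G}
    (hkz : ∀ n, k n ∈ stabilizer G z) {r a : M} (hcol : IsCollapsing k r a) : r = z ∧ a = z :=
  ⟨hconv.eq_of_isCollapsing_of_mem_stabilizer h3 hnolox (fun n => inv_mem (hkz n)) hcol.inv,
    hconv.eq_of_isCollapsing_of_mem_stabilizer h3 hnolox hkz hcol⟩

theorem finite_setOf_mem_stabilizer_smul_inter_nonempty (hconv : IsConvergenceAction G M)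
    (h3 : ∃ a b c : M, a ≠ b ∧ a ≠ c ∧ b ≠ c) {z : M}
    (hnolox : ∀ g ∈ stabilizer G z, ¬IsLoxodromic G M g) {C C' : Set M} (hC : IsCompact C)
    (hC' : IsCompact C') (hzC : z ∉ C) (hzC' : z ∉ C') :
    {f : G | f ∈ stabilizer G z ∧ (f • C ∩ C').Nonempty}.Finite := by
  by_contra hinf
  let e := Set.Infinite.natEmbedding _ hinf
  have hk : Tendsto (fun n => (e n : G)) atTop cofinite :=
    (Subtype.val_injective.comp e.injective).tendsto_cofinite.mono_left atTop_le_cofinite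
  obtain ⟨φ, -, r, a, hcol⟩ := hconv.exists_isCollapsing_subseq h3 hk
  obtain ⟨rfl, rfl⟩ :=
    hconv.eq_and_eq_of_isCollapsing_of_mem_stabilizer h3 hnolox (fun n => (e (φ n)).2.1) hcol
  obtain ⟨n, hn⟩ := (hcol C hC hzC _ (hC'.isClosed.isOpen_compl.mem_nhds hzC')).exists
  obtain ⟨x, hx, hx'⟩ := (e (φ n)).2.2
  exact hn hx hx'

end IsConvergenceAction

end Parabolic

section LimitSet

variable {G M : Type*} [Group G] [MulAction G M] [TopologicalSpace M]

lemma mem_derivedSet_iff_mem_closure_diff {A : Set M} {x : M} :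
    x ∈ derivedSet A ↔ x ∈ closure (A \ {x}) :=
  accPt_iff_frequently_nhdsNE.trans mem_closure_ne_iff_frequently_within.symm

lemma exists_isOpen_inter_eq_singleton_of_notMem_closure_diff {S : Set M} {z : M} (hz : z ∈ S)
    (h : z ∉ closure (S \ {z})) : ∃ U : Set M, IsOpen U ∧ U ∩ S = {z} := by
  refine ⟨(closure (S \ {z}))ᶜ, isClosed_closure.isOpen_compl,
    Subset.antisymm (fun y ⟨hy, hyS⟩ => ?_) ?_⟩
  · by_contra hyz
    exact hy (subset_closure ⟨hyS, hyz⟩)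
  · rintro _ rfl
    exact ⟨h, hz⟩

lemma limitSet_eq_iUnion_derivedSet (K : Subgroup G) :
    limitSet G M K = ⋃ m : M, derivedSet (orbit K m) := by
  ext x
  have horbit : ∀ m : M, (fun h : G => h • m) '' (K : Set G) = orbit K m := fun m => by
    ext y
    simp [mem_orbit_iff]
  simp only [limitSet, horbit, mem_iUnion, mem_derivedSet_iff_mem_closure_diff]
  rfl

lemma mem_limitSet_iff {K : Subgroup G} {x : M} :
    x ∈ limitSet G M K ↔ ∃ m : M, x ∈ derivedSet (orbit K m) := by
  rw [limitSet_eq_iUnion_derivedSet, mem_iUnion]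

lemma limitSet_mono {K K' : Subgroup G} (h : K ≤ K') : limitSet G M K ⊆ limitSet G M K' := by
  intro x hx
  obtain ⟨m, hm⟩ := mem_limitSet_iff.1 hx
  refine mem_limitSet_iff.2 ⟨m, derivedSet_mono _ _ ?_ hm⟩
  rintro _ ⟨k, rfl⟩
  exact ⟨⟨k, h k.2⟩, rfl⟩

lemma smul_mem_limitSet [ContinuousConstSMul G M] {K : Subgroup G} {g : G} (hg : g ∈ K) {x : M}
    (hx : x ∈ limitSet G M K) : g • x ∈ limitSet G M K := by
  obtain ⟨m, hm⟩ := mem_limitSet_iff.1 hx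
  refine mem_limitSet_iff.2 ⟨m, ?_⟩
  have h :=
    (continuous_const_smul g).image_derivedSet (MulAction.injective g) (mem_image_of_mem _ hm)
  have horbit : g • orbit K m = orbit K m := smul_orbit (⟨g, hg⟩ : K) m
  rwa [image_smul, horbit] at h

lemma Filter.Tendsto.eventually_eq_of_notMem_derivedSet {A : Set M} {x : M} {p : ℕ → M}
    (hp : Tendsto p atTop (𝓝 x)) (hpA : ∀ n, p n ∈ A) (hx : x ∉ derivedSet A) :
    ∀ᶠ n in atTop, p n = x := by
  rw [mem_derivedSet, accPt_iff_frequently, not_frequently] at hx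
  filter_upwards [hp.eventually hx] with n hn
  by_contra h
  exact hn ⟨h, hpA n⟩

lemma exists_tendsto_of_mem_limitSet [FirstCountableTopology M] [T1Space M] {K : Subgroup G}
    {x : M} (hx : x ∈ limitSet G M K) :
    ∃ (m : M) (k : ℕ → G), (∀ n, k n ∈ K) ∧ Tendsto k atTop cofinite ∧
      Tendsto (fun n => k n • m) atTop (𝓝 x) ∧ ∀ n, k n • m ≠ x := by
  obtain ⟨m, hm⟩ := hx
  obtain ⟨p, hp, hpx⟩ := mem_closure_iff_seq_limit.1 hm
  choose k hkK hkm using fun n => (hp n).1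
  refine ⟨m, k, hkK, fun s hs => ?_, by simpa only [hkm] using hpx,
    fun n => by simpa only [hkm, mem_singleton_iff] using (hp n).2⟩
  have hT : IsClosed (((fun h : G => h • m) '' sᶜ) \ {x}) := ((hs.image _).sdiff).isClosed
  refine mem_map.2 ?_
  filter_upwards [hpx.eventually (hT.isOpen_compl.mem_nhds fun h => h.2 rfl)] with n hn
  by_contra hks
  exact hn ⟨⟨k n, hks, hkm n⟩, (hp n).2⟩

end LimitSet

section LimitSetDynamics

variable {G M : Type*} [Group G] [MulAction G M] [MetricSpace M] [CompactSpace M]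

namespace IsConvergenceAction

theorem exists_forall_mem_derivedSet_orbit (hconv : IsConvergenceAction G M)
    (h3 : ∃ a b c : M, a ≠ b ∧ a ≠ c ∧ b ≠ c) {K : Subgroup G} {x : M}
    (hx : x ∈ limitSet G M K) :
    ∃ e₁ e₂ : M, ∀ y, y ≠ e₁ → y ≠ e₂ → x ∈ derivedSet (orbit K y) := by
  have : ContinuousConstSMul G M := ⟨hconv.1⟩
  obtain ⟨m, k, hkK, hk, hkm, hkx⟩ := exists_tendsto_of_mem_limitSet hx
  obtain ⟨φ, hφ, r, a, hcol⟩ := hconv.exists_isCollapsing_subseq h3 hk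
  have hkmφ := hkm.comp hφ.tendsto_atTop
  by_cases hmr : m = r
  · -- each `k (φ n) • m` is a limit of `k (φ n) (k (φ j))⁻¹ • y`, as `(k (φ j))⁻¹ • y → m`
    refine ⟨a, a, fun y hya _ => mem_derivedSet_iff_mem_closure_diff.2 <|
      isClosed_closure.mem_of_tendsto hkmφ (Eventually.of_forall fun n => ?_)⟩
    have hlim : Tendsto (fun j => (k (φ n) * (k (φ j))⁻¹) • y) atTop (𝓝 (k (φ n) • m)) := by
      simpa only [mul_smul, Function.comp_def] using
        ((continuous_const_smul (k (φ n))).tendsto m).comp (hmr ▸ hcol.inv.tendsto hya)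
    refine mem_closure_of_tendsto hlim ?_
    filter_upwards [hlim.eventually (isOpen_compl_singleton.mem_nhds (hkx (φ n)))] with j hj
    exact ⟨⟨⟨_, K.mul_mem (hkK _) (K.inv_mem (hkK _))⟩, rfl⟩, hj⟩
  · obtain rfl : a = x := tendsto_nhds_unique (hcol.tendsto hmr) hkmφ
    have hev : ∀ y, y ≠ r → a ∉ derivedSet (orbit K y) → ∀ᶠ n in atTop, k (φ n) • y = a :=
      fun y hyr hy => (hcol.tendsto hyr).eventually_eq_of_notMem_derivedSet (A := orbit K y)
        (fun n => ⟨⟨k (φ n), hkK _⟩, rfl⟩) hy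
    by_cases hexc : ∃ y₀, y₀ ≠ r ∧ a ∉ derivedSet (orbit K y₀)
    · obtain ⟨y₀, hy₀r, hy₀⟩ := hexc
      refine ⟨r, y₀, fun y hyr hyy₀ => by_contra fun hy => hyy₀ ?_⟩
      obtain ⟨n, hn, hn₀⟩ := ((hev y hyr hy).and (hev y₀ hy₀r hy₀)).exists
      exact MulAction.injective _ (hn.trans hn₀.symm)
    · push Not at hexc
      exact ⟨r, r, fun y hyr _ => hexc y hyr⟩

theorem isClosed_limitSet (hconv : IsConvergenceAction G M)
    (h3 : ∃ a b c : M, a ≠ b ∧ a ≠ c ∧ b ≠ c) (K : Subgroup G) :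
    IsClosed (limitSet G M K) := by
  obtain ⟨y₁, y₂, y₃, h₁₂, h₁₃, h₂₃⟩ := id h3
  have hΛ : limitSet G M K =
      derivedSet (orbit K y₁) ∪ derivedSet (orbit K y₂) ∪ derivedSet (orbit K y₃) := by
    refine Subset.antisymm (fun x hx => ?_) ?_
    · obtain ⟨e₁, e₂, he⟩ := hconv.exists_forall_mem_derivedSet_orbit h3 hx
      rcases ne_and_ne_or_ne_and_ne_or_ne_and_ne h₁₂ h₁₃ h₂₃ e₁ e₂ with h | h | h
      · exact Or.inl (Or.inl (he _ h.1 h.2))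
      · exact Or.inl (Or.inr (he _ h.1 h.2))
      · exact Or.inr (he _ h.1 h.2)
    · rw [limitSet_eq_iUnion_derivedSet]
      exact union_subset (union_subset (subset_iUnion_of_subset y₁ le_rfl)
        (subset_iUnion_of_subset y₂ le_rfl)) (subset_iUnion_of_subset y₃ le_rfl)
  rw [hΛ]
  exact ((isClosed_derivedSet _).union (isClosed_derivedSet _)).union (isClosed_derivedSet _)

end IsConvergenceAction

end LimitSetDynamics

lemma Subgroup.infinite_inf_of_finite_range {G ι β : Type*} [Group G] {A B : Subgroup G}
    {t : ι → G} {c : ι → β} (htA : ∀ i, t i ∈ A) (ht : (range t).Infinite)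
    (hc : (range c).Finite) (hB : ∀ i j, c i = c j → t j * (t i)⁻¹ ∈ B) :
    ((A ⊓ B : Subgroup G) : Set G).Infinite := by
  obtain ⟨b, -, hb⟩ : ∃ b ∈ range c, (t '' (c ⁻¹' {b})).Infinite := by
    by_contra! h
    refine ht ((hc.biUnion fun b hb => h b hb).subset ?_)
    rintro _ ⟨i, rfl⟩
    exact mem_biUnion (mem_range_self i) ⟨i, rfl, rfl⟩
  obtain ⟨_, i₀, hi₀, rfl⟩ := hb.nonempty
  refine (hb.image (mul_left_injective (t i₀)⁻¹).injOn).mono ?_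
  rintro _ ⟨_, ⟨i, hi, rfl⟩, rfl⟩
  exact ⟨A.mul_mem (htA i) (A.inv_mem (htA i₀)), hB i₀ i (hi₀.trans hi.symm)⟩

lemma inv_mul_mem_of_mem_smul {G M : Type*} [Group G] [MulAction G M] {z : M} {a b : G}
    (ha : a ∈ stabilizer G z) (hb : b ∈ stabilizer G z) {C C' : Set M} {x : M}
    (hxa : x ∈ a • C) (hxb : x ∈ b • C') :
    a⁻¹ * b ∈ {f : G | f ∈ stabilizer G z ∧ (f • C' ∩ C).Nonempty} := by
  obtain ⟨c, hc, rfl⟩ := hxa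
  obtain ⟨c', hc', hc'x⟩ := hxb
  refine ⟨mul_mem (inv_mem ha) hb, c, ⟨c', hc', ?_⟩, hc⟩
  change (a⁻¹ * b) • c' = c
  rw [mul_smul, show b • c' = a • c from hc'x, inv_smul_smul]

section Intersection

variable {G M : Type*} [Group G] [MulAction G M] [TopologicalSpace M]

lemma infinite_range_of_tendsto_of_mem_smul [T2Space M] [ContinuousConstSMul G M] {z : M}
    {C : Set M} (hC : IsCompact C) (hzC : z ∉ C) {h : ℕ → G} (hh : ∀ n, h n • z = z)
    {x : ℕ → M} (hx : Tendsto x atTop (𝓝 z)) (hxC : ∀ n, x n ∈ h n • C) :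
    (range h).Infinite := by
  intro hfin
  have hT : IsClosed (⋃ g ∈ range h, g • C) :=
    (hfin.isCompact_biUnion fun g _ => hC.smul g).isClosed
  obtain ⟨_, ⟨n, rfl⟩, c, hc, hcz⟩ := mem_iUnion₂.1 <| hT.mem_of_tendsto hx <|
    Eventually.of_forall fun n => mem_iUnion₂.2 ⟨h n, mem_range_self n, hxC n⟩
  rw [MulAction.injective (h n) (hcz.trans (hh n).symm)] at hc
  exact hzC hc

variable {A B : Subgroup G} {z : M} {CA CB : Set M}

lemma exists_isCompact_forall_inv_smul_mem [ContinuousConstSMul G M]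
    (hA : A ≤ stabilizer G z) (hB : B ≤ stabilizer G z) (hCA : IsCompact CA) (hzCA : z ∉ CA)
    (hF : {f : G | f ∈ stabilizer G z ∧ (f • CB ∩ CA).Nonempty}.Finite) :
    ∃ C : Set M, IsCompact C ∧ z ∉ C ∧
      ∀ x ∈ (⋃ a ∈ A, a • CA) ∩ ⋃ b ∈ B, b • CB, ∃ g ∈ A ⊓ B, g⁻¹ • x ∈ C := by
  have hsel : ∀ f : G, ∃ α ∈ A, (∃ a ∈ A, a * f ∈ B) → α * f ∈ B := fun f => by
    by_cases h : ∃ a ∈ A, a * f ∈ B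
    · obtain ⟨a, ha, haf⟩ := h
      exact ⟨a, ha, fun _ => haf⟩
    · exact ⟨1, A.one_mem, fun h' => absurd h' h⟩
  choose α hαA hαB using hsel
  refine ⟨⋃ f ∈ {f : G | f ∈ stabilizer G z ∧ (f • CB ∩ CA).Nonempty}, α f • CA,
    hF.isCompact_biUnion fun f _ => hCA.smul _, ?_, ?_⟩
  · simp only [mem_iUnion₂, not_exists]
    rintro f - ⟨c, hc, hcz⟩
    rw [MulAction.injective (α f) (hcz.trans (hA (hαA f)).symm)] at hc
    exact hzCA hc
  · rintro x ⟨hxa, hxb⟩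
    obtain ⟨a, ha, hxa⟩ := mem_iUnion₂.1 hxa
    obtain ⟨b, hb, hxb⟩ := mem_iUnion₂.1 hxb
    have hfF := inv_mul_mem_of_mem_smul (hA ha) (hB hb) hxa hxb
    have hαf : α (a⁻¹ * b) * (a⁻¹ * b) ∈ B := hαB _ ⟨a, ha, by rwa [mul_inv_cancel_left]⟩
    obtain ⟨c, hc, rfl⟩ := hxa
    refine ⟨a * (α (a⁻¹ * b))⁻¹, ⟨A.mul_mem ha (A.inv_mem (hαA _)), ?_⟩,
      mem_iUnion₂.2 ⟨_, hfF, c, hc, by simp [mul_smul]⟩⟩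
    have : a * (α (a⁻¹ * b))⁻¹ = b * (α (a⁻¹ * b) * (a⁻¹ * b))⁻¹ := by group
    rw [this]
    exact B.mul_mem hb (B.inv_mem hαf)

lemma infinite_inf_of_tendsto [T2Space M] [ContinuousConstSMul G M]
    (hA : A ≤ stabilizer G z) (hB : B ≤ stabilizer G z) (hCA : IsCompact CA) (hzCA : z ∉ CA)
    (hF : {f : G | f ∈ stabilizer G z ∧ (f • CB ∩ CA).Nonempty}.Finite) {x : ℕ → M}
    (hx : Tendsto x atTop (𝓝 z)) (hxA : ∀ n, x n ∈ ⋃ a ∈ A, a • CA)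
    (hxB : ∀ n, x n ∈ ⋃ b ∈ B, b • CB) : ((A ⊓ B : Subgroup G) : Set G).Infinite := by
  choose a haA hxa using fun n => mem_iUnion₂.1 (hxA n)
  choose b hbB hxb using fun n => mem_iUnion₂.1 (hxB n)
  refine Subgroup.infinite_inf_of_finite_range haA
    (infinite_range_of_tendsto_of_mem_smul hCA hzCA (fun n => hA (haA n)) hx hxa)
    (c := fun n => (a n)⁻¹ * b n) (hF.subset ?_) fun i j hij => ?_
  · rintro _ ⟨n, rfl⟩
    exact inv_mul_mem_of_mem_smul (hA (haA n)) (hB (hbB n)) (hxa n) (hxb n)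
  · have : a j * (a i)⁻¹ = b j * (b i)⁻¹ := calc
      a j * (a i)⁻¹ = b j * ((a j)⁻¹ * b j)⁻¹ * (a i)⁻¹ := by group
      _ = b j * ((a i)⁻¹ * b i)⁻¹ * (a i)⁻¹ := by rw [hij]
      _ = b j * (b i)⁻¹ := by group
    rw [this]
    exact B.mul_mem (hbB j) (B.inv_mem (hbB i))

end Intersection

lemma IsBoundedParabolicPoint.exists_isCompact_notMem {G M : Type*} [Group G] [MulAction G M]
    [TopologicalSpace M] {H : Subgroup G} {z : M}
    (h : IsBoundedParabolicPoint G M H z) :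
    ∃ C : Set M, IsCompact C ∧ z ∉ C ∧
      limitSet G M H \ {z} ⊆ ⋃ g ∈ (H ⊓ stabilizer G z : Subgroup G), g • C :=
  let ⟨_, _, C, hC, hCΛ, hΛC⟩ := h
  ⟨C, hC, fun hz => (hCΛ hz).2 rfl, hΛC⟩

section BoundedParabolic

variable {G M : Type*} [Group G] [MulAction G M] [MetricSpace M] [CompactSpace M]

namespace IsConvergenceAction

/-- `S` lies in the two exceptional points of `exists_forall_mem_derivedSet_orbit`, so the
`K`-orbit of `z` is finite. -/
theorem infinite_inf_stabilizer_of_isolated (hconv : IsConvergenceAction G M)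
    (h3 : ∃ a b c : M, a ≠ b ∧ a ≠ c ∧ b ≠ c) {K : Subgroup G} {S : Set M}
    (hKS : ∀ g ∈ K, ∀ y ∈ S, g • y ∈ S) {z : M} (hz : z ∈ limitSet G M K) {U : Set M}
    (hU : IsOpen U) (hUS : U ∩ S = {z}) :
    ((K ⊓ stabilizer G z : Subgroup G) : Set G).Infinite := by
  obtain ⟨e₁, e₂, he⟩ := hconv.exists_forall_mem_derivedSet_orbit h3 hz
  have hzUS : z ∈ U ∩ S := hUS ▸ mem_singleton z
  have hS : S ⊆ {e₁, e₂} := by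
    intro y hy
    by_contra hye
    simp only [mem_insert_iff, mem_singleton_iff, not_or] at hye
    obtain ⟨_, ⟨hpU, k, rfl⟩, hpz⟩ :=
      accPt_iff_nhds.1 (he y hye.1 hye.2) U (hU.mem_nhds hzUS.1)
    exact hpz (hUS.subset ⟨hpU, hKS k k.2 y hy⟩)
  obtain ⟨m, k, hkK, hk, -, -⟩ := exists_tendsto_of_mem_limitSet hz
  refine Subgroup.infinite_inf_of_finite_range hkK (fun hfin => ?_) (c := fun n => (k n)⁻¹ • z)
    ((toFinite {e₁, e₂}).subset (range_subset_iff.2 fun n =>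
      hS (hKS _ (K.inv_mem (hkK n)) z hzUS.2))) fun i j hij => ?_
  · obtain ⟨n, hn⟩ := (hk.eventually_mem hfin.compl_mem_cofinite).exists
    exact hn (mem_range_self n)
  · change (k j * (k i)⁻¹) • z = z
    rw [mul_smul, hij, smul_inv_smul]

theorem infinite_inf_stabilizer_of_isBoundedParabolicPoint (hconv : IsConvergenceAction G M)
    (h3 : ∃ a b c : M, a ≠ b ∧ a ≠ c ∧ b ≠ c) {H J : Subgroup G} {z : M}
    (hnolox : ∀ g ∈ stabilizer G z, ¬IsLoxodromic G M g)
    (hbpH : IsBoundedParabolicPoint G M H z) (hbpJ : IsBoundedParabolicPoint G M J z)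
    (hz : z ∈ limitSet G M H ∩ limitSet G M J)
    (hiso : (∃ U : Set M, IsOpen U ∧ U ∩ (limitSet G M H ∩ limitSet G M J) = {z}) →
      z ∈ limitSet G M (H ⊓ J)) :
    ((H ⊓ J ⊓ stabilizer G z : Subgroup G) : Set G).Infinite := by
  have : ContinuousConstSMul G M := ⟨hconv.1⟩
  by_cases hU : ∃ U : Set M, IsOpen U ∧ U ∩ (limitSet G M H ∩ limitSet G M J) = {z}
  · obtain ⟨U, hUo, hUS⟩ := hU
    exact hconv.infinite_inf_stabilizer_of_isolated h3 (K := H ⊓ J)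
      (S := limitSet G M H ∩ limitSet G M J)
      (fun g hg y hy => ⟨smul_mem_limitSet hg.1 hy.1, smul_mem_limitSet hg.2 hy.2⟩)
      (hiso ⟨U, hUo, hUS⟩) hUo hUS
  obtain ⟨CH, hCH, hzCH, hΛCH⟩ := hbpH.exists_isCompact_notMem
  obtain ⟨CJ, hCJ, hzCJ, hΛCJ⟩ := hbpJ.exists_isCompact_notMem
  have hacc : z ∈ closure ((limitSet G M H ∩ limitSet G M J) \ {z}) :=
    by_contra fun h => hU (exists_isOpen_inter_eq_singleton_of_notMem_closure_diff hz h)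
  obtain ⟨x, hxS, hx⟩ := mem_closure_iff_seq_limit.1 hacc
  rw [inf_inf_distrib_right]
  exact infinite_inf_of_tendsto inf_le_right inf_le_right hCH hzCH
    (hconv.finite_setOf_mem_stabilizer_smul_inter_nonempty h3 hnolox hCJ hCH hzCJ hzCH) hx
    (fun n => hΛCH ⟨(hxS n).1.1, (hxS n).2⟩) (fun n => hΛCJ ⟨(hxS n).1.2, (hxS n).2⟩)

theorem exists_isCompact_cover_limitSet_inf (hconv : IsConvergenceAction G M)
    (h3 : ∃ a b c : M, a ≠ b ∧ a ≠ c ∧ b ≠ c) {H J : Subgroup G} {z : M}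
    (hnolox : ∀ g ∈ stabilizer G z, ¬IsLoxodromic G M g)
    (hbpH : IsBoundedParabolicPoint G M H z) (hbpJ : IsBoundedParabolicPoint G M J z) :
    ∃ C : Set M, IsCompact C ∧ C ⊆ limitSet G M (H ⊓ J) \ {z} ∧
      limitSet G M (H ⊓ J) \ {z} ⊆
        ⋃ g ∈ (H ⊓ J ⊓ stabilizer G z : Subgroup G), g • C := by
  have : ContinuousConstSMul G M := ⟨hconv.1⟩
  obtain ⟨CH, hCH, hzCH, hΛCH⟩ := hbpH.exists_isCompact_notMem
  obtain ⟨CJ, hCJ, hzCJ, hΛCJ⟩ := hbpJ.exists_isCompact_notMem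
  obtain ⟨C, hC, hzC, hcover⟩ := exists_isCompact_forall_inv_smul_mem inf_le_right inf_le_right
    hCH hzCH (hconv.finite_setOf_mem_stabilizer_smul_inter_nonempty h3 hnolox hCJ hCH hzCJ hzCH)
  refine ⟨C ∩ limitSet G M (H ⊓ J), hC.inter_right (hconv.isClosed_limitSet h3 _),
    fun x hx => ⟨hx.2, fun h => hzC (h ▸ hx.1)⟩, fun x hx => ?_⟩
  obtain ⟨g, hg, hgx⟩ := hcover x ⟨hΛCH ⟨limitSet_mono inf_le_left hx.1, hx.2⟩,
    hΛCJ ⟨limitSet_mono inf_le_right hx.1, hx.2⟩⟩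
  rw [← inf_inf_distrib_right] at hg
  exact mem_iUnion₂.2 ⟨g, hg, g⁻¹ • x,
    ⟨hgx, smul_mem_limitSet (inv_mem hg.1) hx.1⟩, smul_inv_smul g x⟩

end IsConvergenceAction

end BoundedParabolic

theorem bounded_parabolic_point_of_intersection_general
    {G M : Type*} [Group G] [TopologicalSpace M] [CompactSpace M]
    [TopologicalSpace.MetrizableSpace M] [MulAction G M]
    (hconv : IsConvergenceAction G M)
    (h3 : ∃ a b c : M, a ≠ b ∧ a ≠ c ∧ b ≠ c)
    (H J : Subgroup G)
    (z : M) (hz : z ∈ limitSet G M H ∩ limitSet G M J)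
    (hnolox : ∀ g ∈ MulAction.stabilizer G z, ¬ IsLoxodromic G M g)
    (hbpH : IsBoundedParabolicPoint G M H z)
    (hbpJ : IsBoundedParabolicPoint G M J z) :
    IsBoundedParabolicPoint G M (H ⊓ J) z ∨
      ((∃ U : Set M, IsOpen U ∧ U ∩ (limitSet G M H ∩ limitSet G M J) = {z}) ∧
        z ∉ limitSet G M (H ⊓ J)) := by
  let := TopologicalSpace.metrizableSpaceMetric M
  refine or_iff_not_imp_right.2 fun h => ⟨?_, fun g hg => hnolox g hg.2,
    hconv.exists_isCompact_cover_limitSet_inf h3 hnolox hbpH hbpJ⟩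
  exact hconv.infinite_inf_stabilizer_of_isBoundedParabolicPoint h3 hnolox hbpH hbpJ hz
    fun hiso => by_contra fun hz' => h ⟨hiso, hz'⟩

/-- if `z ∈ Λ(H) ∩ Λ(J)` is a bounded parabolic point of two infinite
subgroups `H` and `J`, and the stabilizer of `z` in `G` contains no loxodromic element,
then `z` is either a bounded parabolic point of `H ∩ J`, or an isolated point of
`Λ(H) ∩ Λ(J)` not lying in `Λ(H ∩ J)`. -/
theorem bounded_parabolic_point_of_intersection
    {G M : Type*} [Group G] [TopologicalSpace M] [CompactSpace M]
    [TopologicalSpace.MetrizableSpace M] [MulAction G M]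
    (hconv : IsConvergenceAction G M)
    (h3 : ∃ a b c : M, a ≠ b ∧ a ≠ c ∧ b ≠ c)
    (H J : Subgroup G)
    (hHinf : (H : Set G).Infinite) (hJinf : (J : Set G).Infinite)
    (z : M) (hz : z ∈ limitSet G M H ∩ limitSet G M J)
    (hnolox : ∀ g ∈ MulAction.stabilizer G z, ¬ IsLoxodromic G M g)
    (hbpH : IsBoundedParabolicPoint G M H z)
    (hbpJ : IsBoundedParabolicPoint G M J z) :
    IsBoundedParabolicPoint G M (H ⊓ J) z ∨
      ((∃ U : Set M, IsOpen U ∧ U ∩ (limitSet G M H ∩ limitSet G M J) = {z}) ∧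
        z ∉ limitSet G M (H ⊓ J)) :=
  bounded_parabolic_point_of_intersection_general hconv h3 H J z hz hnolox hbpH hbpJ
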